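/- arXiv:2307.11754 — 7 statements merged into one kernel-verified Lean document; each statement's English description precedes it below -/
import Mathlib

section
/- For an algorithmic stablecoin with trivial incentives (i(x) = x), if θ ≥ θ̄ where r^c(T^s, θ̄) = 1, then for every Q ∈ [0, T^s] the redemption value v = r^c(Q, θ) satisfies v ≥ 1, and hence the pegging state p(M) = 1 is the unique equilibrium of the game. -/
/-- Equilibrium notion: no user's rational unilateral deviation changes the price. -/
def IsEq (p : ℝ → ℝ) (alt M : ℝ) : Prop :=
  (p M < alt → p M = 1) ∧ ¬ (alt < p M)

/-- **algorithmic stablecoin, good fundamentals.** With trivial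
incentives, if `θ ≥ θbar` where `rc Ts θbar = 1`, then `rc Q θ ≥ 1` for every
`Q ∈ [0, Ts]`, and hence the pegging state `p M = 1` is the unique equilibrium
of the game (with redemption value `v = rc Q θ`, future redemption value
`v' = rc Q' θ`, and holding payoff `max (p M') v'`). -/
theorem stmt5
    (p : ℝ → ℝ) (rc : ℝ → ℝ → ℝ) (Ts θ θbar : ℝ)
    (hp : StrictAnti p) (hple : ∀ M, p M ≤ 1) (hTs : 0 < Ts)
    (hdec : ∀ t : ℝ, StrictAntiOn (fun Q => rc Q t) (Set.Icc 0 Ts))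
    (hinc : ∀ Q ∈ Set.Icc (0:ℝ) Ts, Monotone (fun t => rc Q t))
    (hbar : rc Ts θbar = 1) (hθ : θbar ≤ θ) :
    (∀ Q ∈ Set.Icc (0:ℝ) Ts, 1 ≤ rc Q θ) ∧
    (∀ M M' Q Q' : ℝ, Q ∈ Set.Icc (0:ℝ) Ts → Q' ∈ Set.Icc (0:ℝ) Ts →
      (IsEq p (max (rc Q θ) (max (rc Q' θ) (p M'))) M ↔ p M = 1)) := by
  have hTsmem : Ts ∈ Set.Icc (0:ℝ) Ts := ⟨le_of_lt hTs, le_refl Ts⟩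
  have key : ∀ Q ∈ Set.Icc (0:ℝ) Ts, 1 ≤ rc Q θ := by
    intro Q hQ
    have h1 : rc Ts θbar ≤ rc Q θbar := by
      rcases eq_or_lt_of_le hQ.2 with h | h
      · rw [h]
      · exact le_of_lt (hdec θbar hQ hTsmem h)
    have h2 : rc Q θbar ≤ rc Q θ := hinc Q hQ hθ
    linarith [hbar ▸ h1]
  refine ⟨key, fun M M' Q Q' hQ hQ' => ?_⟩
  set alt := max (rc Q θ) (max (rc Q' θ) (p M')) with halt
  have h1alt : 1 ≤ alt := le_trans (key Q hQ) (le_max_left _ _)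
  constructor
  · rintro ⟨h, -⟩
    by_contra hne
    have hlt : p M < 1 := lt_of_le_of_ne (hple M) hne
    exact hne (h (lt_of_lt_of_le hlt h1alt))
  · intro hM
    exact ⟨fun _ => hM, not_lt.mpr (le_trans (le_of_eq hM) h1alt)⟩
end

section
/- For an algorithmic stablecoin with trivial incentives, if θ < θ_ where r^c(0, θ_) = 1, then v = r^c(Q, θ) < 1 for every Q ≥ 0; consequently the pegging state p(M) = 1 is not an equilibrium: at p(M) = 1 every user strictly prefers selling in the market over redeeming, so the price must fall below 1. -/
theorem lt_of_strictMono_of_antitoneOn {α β γ : Type*} [Preorder α] [Preorder β] [Preorder γ]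
    {f : α → β → γ} {S : Set α} {a x : α} {s t : β}
    (hanti : AntitoneOn (fun y => f y t) S) (hmono : StrictMono (f x))
    (ha : a ∈ S) (hx : x ∈ S) (hax : a ≤ x) (hst : s < t) :
    f x s < f a t :=
  (hmono hst).trans_le (hanti ha hx hax)

theorem stmt6_general
    (p : ℝ → ℝ) (rc : ℝ → ℝ → ℝ) (θ θlow : ℝ)
    (hdec : ∀ t : ℝ, StrictAntiOn (fun Q => rc Q t) (Set.Ici 0))
    (hinc : ∀ Q : ℝ, 0 ≤ Q → StrictMono (fun t => rc Q t))
    (hlow : rc 0 θlow = 1) (hθ : θ < θlow) :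
    (∀ Q : ℝ, 0 ≤ Q → rc Q θ < 1) ∧
    (∀ M, p M = 1 → ∀ Q Q' : ℝ, 0 ≤ Q → 0 ≤ Q' →
      max (rc Q θ) (rc Q' θ) < p M) := by
  have redeem_lt_one (Q : ℝ) (hQ : 0 ≤ Q) : rc Q θ < 1 :=
    hlow ▸ lt_of_strictMono_of_antitoneOn (hdec θlow).antitoneOn (hinc Q hQ)
      Set.self_mem_Ici hQ hQ hθ
  refine ⟨redeem_lt_one, fun M hM Q Q' hQ hQ' => ?_⟩
  rw [hM]
  exact max_lt (redeem_lt_one Q hQ) (redeem_lt_one Q' hQ')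

/-- **algorithmic stablecoin, poor fundamentals.** With trivial
incentives, if `θ < θlow` where `rc 0 θlow = 1`, then the redemption value
`v = rc Q θ` is below `1` for every `Q ≥ 0`; consequently the pegging state is
not an equilibrium: at `p M = 1` every user strictly prefers selling in the
market over redeeming (now, with payoff `rc Q θ`, or in the future, with payoff
`v' = rc Q' θ`), so the price must fall below `1`. -/
theorem stmt6
    (p : ℝ → ℝ) (rc : ℝ → ℝ → ℝ) (θ θlow : ℝ)
    (hp : StrictAnti p) (hple : ∀ M, p M ≤ 1)
    (hdec : ∀ t : ℝ, StrictAntiOn (fun Q => rc Q t) (Set.Ici 0))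
    (hinc : ∀ Q : ℝ, 0 ≤ Q → StrictMono (fun t => rc Q t))
    (hlow : rc 0 θlow = 1) (hθ : θ < θlow) :
    (∀ Q : ℝ, 0 ≤ Q → rc Q θ < 1) ∧
    (∀ M, p M = 1 → ∀ Q Q' : ℝ, 0 ≤ Q → 0 ≤ Q' →
      max (rc Q θ) (rc Q' θ) < p M) :=
  stmt6_general p rc θ θlow hdec hinc hlow hθ
end

section
/- For a crypto-collateralized stablecoin, even with reserves fully covering the supply (V^c(θ) ≥ T^s), if θ < θ_ where r^c(0, θ_) = 1, then v = r^c(Q, θ) < 1 for all Q ∈ [0, T^s], so the pegging state p(M) = 1 is not an equilibrium. That is, full crypto backing does not guarantee the peg under poor fundamentals. -/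
/-- **full crypto backing does not guarantee the peg.** Even with
reserves fully covering the supply (`Vc θ ≥ Ts`), if `θ < θlow` where
`rc 0 θlow = 1`, then the redemption value `v = rc Q θ < 1` for all
`Q ∈ [0, Ts]`, so the pegging state `p M = 1` is not an equilibrium: at
`p M = 1` selling strictly dominates all (current and future) redemption
payoffs, and the price falls. -/
theorem stmt9
    (p : ℝ → ℝ) (rc : ℝ → ℝ → ℝ) (Vc : ℝ → ℝ) (Ts θ θlow : ℝ)
    (hp : StrictAnti p) (hple : ∀ M, p M ≤ 1) (hTs : 0 < Ts)
    (hdec : ∀ t : ℝ, StrictAntiOn (fun Q => rc Q t) (Set.Icc 0 Ts))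
    (hinc : ∀ Q ∈ Set.Icc (0:ℝ) Ts, StrictMono (fun t => rc Q t))
    (hfull : Ts ≤ Vc θ)
    (hlow : rc 0 θlow = 1) (hθ : θ < θlow) :
    (∀ Q ∈ Set.Icc (0:ℝ) Ts, Q ≤ Vc θ ∧ rc Q θ < 1) ∧
    (∀ M, p M = 1 → ∀ Q ∈ Set.Icc (0:ℝ) Ts, ∀ Q' ∈ Set.Icc (0:ℝ) Ts,
      max (rc Q θ) (rc Q' θ) < p M) := by
  have h0 : (0:ℝ) ∈ Set.Icc (0:ℝ) Ts := ⟨le_refl 0, hTs.le⟩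
  have key : ∀ Q ∈ Set.Icc (0:ℝ) Ts, rc Q θ < 1 := by
    intro Q hQ
    have h1 : rc Q θ ≤ rc 0 θ := by
      rcases eq_or_lt_of_le hQ.1 with h | h
      · rw [← h]
      · exact ((hdec θ) h0 hQ h).le
    have h2 : rc 0 θ < rc 0 θlow := hinc 0 h0 hθ
    calc rc Q θ ≤ rc 0 θ := h1
      _ < rc 0 θlow := h2
      _ = 1 := hlow
  refine ⟨fun Q hQ => ⟨hQ.2.trans hfull, key Q hQ⟩, fun M hM Q hQ Q' hQ' => ?_⟩
  rw [hM]
  exact max_lt (key Q hQ) (key Q' hQ')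
end

section
/- For a crypto-collateralized stablecoin with θ < θ_ and r^c(0, θ) ≤ e(θ), the state p(M) = e(θ) is an equilibrium: the redemption payoff v ≤ r^c(0, θ) ≤ e(θ) = p(M) for every Q ≥ 0, so no user strictly benefits from switching from selling to redeeming or holding, and the price remains at e(θ). -/
/-- **crypto-collateralized depegging equilibrium.** For
`θ < θlow` with `rc 0 θ ≤ e θ < 1`, the redemption payoff
`v Q = rc Q θ` (or `rc Q θ · Vc θ / Q` when reserves are exceeded) satisfies
`v Q ≤ rc 0 θ ≤ e θ` for every `Q ≥ 0`, so the state `p M = e θ` is an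
equilibrium: no user strictly benefits from switching away from selling. -/
theorem stmt10
    (p : ℝ → ℝ) (rc : ℝ → ℝ → ℝ) (Vc : ℝ → ℝ) (v : ℝ → ℝ) (θ θlow eθ : ℝ)
    (hp : StrictAnti p) (hple : ∀ M, p M ≤ 1)
    (hdec : AntitoneOn (fun Q => rc Q θ) (Set.Ici 0))
    (hrcpos : ∀ Q : ℝ, 0 ≤ Q → 0 ≤ rc Q θ)
    (hVc : 0 ≤ Vc θ)
    (hv : ∀ Q : ℝ, v Q = if Q ≤ Vc θ then rc Q θ else rc Q θ * (Vc θ / Q))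
    (hlow : rc 0 θlow = 1) (hθ : θ < θlow)
    (he1 : rc 0 θ ≤ eθ) (he2 : eθ < 1) :
    (∀ Q : ℝ, 0 ≤ Q → v Q ≤ eθ) ∧
    (∀ M Q Q' : ℝ, 0 ≤ Q → 0 ≤ Q' → p M = eθ →
      IsEq p (max (v Q) (max (v Q') (p M))) M) := by
  have key : ∀ Q : ℝ, 0 ≤ Q → v Q ≤ eθ := by
    intro Q hQ
    rw [hv Q]
    have h0 : rc Q θ ≤ rc 0 θ := hdec (Set.mem_Ici.mpr le_rfl) (Set.mem_Ici.mpr hQ) hQ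
    split_ifs with h
    · exact h0.trans he1
    · have hQpos : 0 < Q := lt_of_le_of_lt hVc (not_le.mp h)
      have : rc Q θ * (Vc θ / Q) ≤ rc Q θ * 1 := by
        apply mul_le_mul_of_nonneg_left _ (hrcpos Q hQ)
        rw [div_le_one hQpos]
        exact (not_le.mp h).le
      linarith [h0.trans he1]
  refine ⟨key, fun M Q Q' hQ hQ' hpM => ?_⟩
  have h1 : v Q ≤ p M := hpM ▸ key Q hQ
  have h2 : v Q' ≤ p M := hpM ▸ key Q' hQ'
  have halt : max (v Q) (max (v Q') (p M)) = p M := by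
    rw [max_eq_right h2, max_eq_right h1]
  constructor
  · rw [halt]; intro h; exact absurd h (lt_irrefl _)
  · rw [halt]; exact lt_irrefl _
end

section
/- Let θ_over be defined by r^c(0, θ_over)·o(θ_over) = 1 and θ_crypto by r^c(0, θ_crypto) = 1, where o(θ) ≥ 1 whenever r^c(0, θ) ≥ 1 (equivalently, o(θ) < 1 implies r^c(0, θ) < 1). Then θ_over ≤ θ_crypto: the depegging threshold of an over-collateralized stablecoin is no larger than that of a crypto-collateralized or algorithmic stablecoin using the same collateral. -/
/-- **threshold comparison.** With `rc 0 ·` strictly increasing on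
an interval `Θ`, and with `o θ < 1` only when `rc 0 θ < 1`, the depegging
threshold `θover` of an over-collateralized stablecoin (defined by
`rc 0 θover * o θover = 1`) is no larger than the threshold `θcrypto` of a
crypto-collateralized or algorithmic stablecoin (defined by
`rc 0 θcrypto = 1`). -/
theorem stmt11
    (Θ : Set ℝ) (hΘ : Θ.OrdConnected)
    (rc : ℝ → ℝ → ℝ) (o : ℝ → ℝ) (θover θcrypto : ℝ)
    (hover : θover ∈ Θ) (hcrypto : θcrypto ∈ Θ)
    (hmono : StrictMonoOn (fun θ => rc 0 θ) Θ)
    (ho : ∀ θ ∈ Θ, o θ < 1 → rc 0 θ < 1)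
    (h1 : rc 0 θover * o θover = 1)
    (h2 : rc 0 θcrypto = 1) :
    θover ≤ θcrypto := by
  by_contra h
  push_neg at h
  have hlt : rc 0 θcrypto < rc 0 θover := hmono hcrypto hover h
  rw [h2] at hlt
  have hpos : 0 < rc 0 θover := lt_trans one_pos hlt
  have hoo : o θover < 1 := by
    nlinarith
  exact absurd (ho θover hover hoo) (not_lt.mpr hlt.le)
end

section
/- For an over-collateralized stablecoin with θ < θ_over (where r^c(0, θ_over)·o(θ_over) = 1 and Q ↦ r^c(Q, θ)·o(θ) is decreasing, r^c(0, ·)·o(·) increasing in θ), every user's redemption payoff satisfies v ≤ r^c(0, θ)·o(θ) < 1, hence the pegging state p(M) = 1 is not an equilibrium and only depegging equilibria exist. -/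
/-- **over-collateralized stablecoin, poor fundamentals.** For
`θ < θover` (where `rc 0 θover * o θover = 1`, `Q ↦ rc Q θ * o θ` is decreasing
and `θ ↦ rc 0 θ * o θ` is increasing), every user's redemption payoff
(`rc Q θ * o θ` or `0`) is below `1`, hence at the pegging state `p M = 1`
selling strictly dominates redemption and `p M = 1` is not an equilibrium. -/
theorem stmt12
    (p : ℝ → ℝ) (rc : ℝ → ℝ → ℝ) (o : ℝ → ℝ) (θ θover : ℝ)
    (hp : StrictAnti p) (hple : ∀ M, p M ≤ 1)
    (hdecQ : ∀ t : ℝ, AntitoneOn (fun Q => rc Q t * o t) (Set.Ici 0))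
    (hincθ : StrictMono (fun t => rc 0 t * o t))
    (hover : rc 0 θover * o θover = 1) (hθ : θ < θover) :
    (∀ Q : ℝ, 0 ≤ Q → rc Q θ * o θ ≤ rc 0 θ * o θ ∧ rc 0 θ * o θ < 1) ∧
    (∀ M, p M = 1 → ∀ Q : ℝ, 0 ≤ Q → ∀ vval : ℝ,
      (vval = rc Q θ * o θ ∨ vval = 0) → vval < p M) := by
  have hlt : rc 0 θ * o θ < 1 := hover ▸ hincθ hθ
  have hle : ∀ Q : ℝ, 0 ≤ Q → rc Q θ * o θ ≤ rc 0 θ * o θ := fun Q hQ =>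
    hdecQ θ (by simp) (by exact hQ) hQ
  refine ⟨fun Q hQ => ⟨hle Q hQ, hlt⟩, fun M hM Q hQ v hv => ?_⟩
  rw [hM]
  rcases hv with h | h
  · exact h ▸ lt_of_le_of_lt (hle Q hQ) hlt
  · exact h ▸ by linarith [hle 0 le_rfl]
end

section
/- Suppose r^c(·, θ) : [0, T^s] → ℝ is continuous and strictly decreasing with r^c(0, θ) > e(θ) and r^c(T^s, θ) ≤ e(θ), where e(θ) < 1. Then there exists a unique Q* ∈ (0, T^s] such that r^c(Q*, θ) = e(θ); for beliefs Q < Q* the induced depegged price r^c(Q, θ) exceeds e(θ), and for beliefs Q ≥ Q* the price settles at e(θ). Hence a continuum of belief-dependent depegging equilibria with prices in [e(θ), r^c(0, θ)) exists. -/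
/-- **continuum of belief-dependent depegging equilibria.** If
`Q ↦ rc Q θ` is continuous and strictly decreasing on `[0, Ts]` with
`rc 0 θ > e θ` and `rc Ts θ ≤ e θ`, where `e θ < 1`, then there is a unique
`Q* ∈ (0, Ts]` with `rc Q* θ = e θ`; for beliefs `Q < Q*` the induced depegged
price `rc Q θ` exceeds `e θ`, for beliefs `Q ≥ Q*` the price settles at `e θ`
(i.e. `rc Q θ ≤ e θ`), and every price in `[e θ, rc 0 θ)` is attained as
`rc Q θ` for some belief `Q ∈ [0, Ts]`. -/
theorem stmt17
    (rc : ℝ → ℝ → ℝ) (Ts θ eθ : ℝ)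
    (hTs : 0 < Ts) (he : eθ < 1)
    (hcont : ContinuousOn (fun Q => rc Q θ) (Set.Icc 0 Ts))
    (hdec : StrictAntiOn (fun Q => rc Q θ) (Set.Icc 0 Ts))
    (h0 : eθ < rc 0 θ) (hT : rc Ts θ ≤ eθ) :
    (∃! Qstar : ℝ, Qstar ∈ Set.Ioc 0 Ts ∧ rc Qstar θ = eθ) ∧
    (∀ Qstar : ℝ, Qstar ∈ Set.Ioc 0 Ts → rc Qstar θ = eθ →
      (∀ Q ∈ Set.Icc (0:ℝ) Ts, Q < Qstar → eθ < rc Q θ) ∧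
      (∀ Q ∈ Set.Icc (0:ℝ) Ts, Qstar ≤ Q → rc Q θ ≤ eθ)) ∧
    (∀ x : ℝ, eθ ≤ x → x < rc 0 θ → ∃ Q ∈ Set.Icc (0:ℝ) Ts, rc Q θ = x) := by
  have hsurj : ∀ x : ℝ, rc Ts θ ≤ x → x ≤ rc 0 θ → ∃ Q ∈ Set.Icc (0:ℝ) Ts, rc Q θ = x := by
    intro x hx1 hx2
    have := intermediate_value_Icc' hTs.le hcont (Set.mem_Icc.2 ⟨hx1, hx2⟩)
    obtain ⟨Q, hQ, hQx⟩ := this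
    exact ⟨Q, hQ, hQx⟩
  refine ⟨?_, ?_, fun x hx1 hx2 => hsurj x (hT.trans hx1) hx2.le⟩
  · obtain ⟨Q, hQ, hQe⟩ := hsurj eθ hT h0.le
    have hQ0 : 0 < Q := by
      rcases eq_or_lt_of_le hQ.1 with h | h
      · exfalso; rw [← h] at hQe; exact absurd hQe (ne_of_gt h0)
      · exact h
    refine ⟨Q, ⟨⟨hQ0, hQ.2⟩, hQe⟩, ?_⟩
    rintro Q' ⟨hQ', hQ'e⟩
    have hQ'm : Q' ∈ Set.Icc (0:ℝ) Ts := ⟨hQ'.1.le, hQ'.2⟩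
    exact hdec.injOn hQ'm hQ (by simp [hQ'e, hQe])
  · rintro Qstar ⟨hQs0, hQsT⟩ hQse
    have hQsm : Qstar ∈ Set.Icc (0:ℝ) Ts := ⟨hQs0.le, hQsT⟩
    constructor
    · intro Q hQ hlt
      have := hdec hQ hQsm hlt
      simpa [hQse] using this
    · intro Q hQ hge
      rcases eq_or_lt_of_le hge with h | h
      · rw [← h]; exact hQse.le
      · have := hdec hQsm hQ h
        simp only [hQse] at this
        exact this.le
end
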